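/- Let G0 be the 'house' graph: vertices w1,...,w7 with edges w1w2, w2w3, w3w4, w4w5, w1w5, w2w5, w3w6, w4w7. In every (1,2,2,2,2)-packing edge-coloring f of G0, the edge w1w2 does not receive the color 1 (the matching color). -/
import Mathlib


open SimpleGraph

/-- The distance between two edges: the minimum, over endpoints `a` of `e` and `b` of `f`,
of the vertex distance between `a` and `b` (as an extended natural number,
`⊤` when no endpoints are connected). -/
noncomputable def edgeDist {V : Type*} (G : SimpleGraph V) (e f : Sym2 V) : ℕ∞ :=
  sInf {d : ℕ∞ | ∃ a ∈ e, ∃ b ∈ f, G.edist a b = d}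

/-- An `S`-packing edge-coloring (in the closest-endpoint vertex-distance convention):
a map `c` assigning to each edge a color `i : Fin k` such that any two distinct
same-colored edges are at edge-distance at least `S i`.  A class with `S i = 1` is a
matching, `S i = 2` an induced matching, etc. -/
def IsPackingEdgeColoring {V : Type*} (G : SimpleGraph V) {k : ℕ} (S : Fin k → ℕ)
    (c : Sym2 V → Fin k) : Prop :=
  ∀ e ∈ G.edgeSet, ∀ f ∈ G.edgeSet, e ≠ f → c e = c f →
    (S (c e) : ℕ∞) ≤ edgeDist G e f

/-- The house graph $G_0$: vertices $w_{i+1}$ = `i : Fin 7`, edges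
$w_1w_2, w_2w_3, w_3w_4, w_4w_5, w_1w_5, w_2w_5, w_3w_6, w_4w_7$. -/
def G0 : SimpleGraph (Fin 7) :=
  SimpleGraph.fromRel (fun a b =>
    (a, b) ∈ ([(0,1),(1,2),(2,3),(3,4),(0,4),(1,4),(2,5),(3,6)] : List (Fin 7 × Fin 7)))

lemma edgeDist_le {V : Type*} (G : SimpleGraph V) {e f : Sym2 V} {a b : V}
    (ha : a ∈ e) (hb : b ∈ f) : edgeDist G e f ≤ G.edist a b :=
  sInf_le ⟨a, ha, b, hb, rfl⟩

instance : DecidableRel G0.Adj := fun a b => by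
  unfold G0; unfold SimpleGraph.fromRel; dsimp; infer_instance

lemma L1 (c : Sym2 (Fin 7) → Fin 5) (h : IsPackingEdgeColoring G0 ![1,2,2,2,2] c)
    {e f : Sym2 (Fin 7)} (he : e ∈ G0.edgeSet) (hf : f ∈ G0.edgeSet) (hef : e ≠ f)
    {v : Fin 7} (hv : v ∈ e) (hv' : v ∈ f) : c e ≠ c f := by
  intro hcc
  have h2 := h e he f hf hef hcc
  have h3 : edgeDist G0 e f ≤ 0 := by
    have := edgeDist_le G0 hv hv'
    rwa [SimpleGraph.edist_self] at this
  have h4 : 1 ≤ ![1,2,2,2,2] (c e) := by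
    have : ∀ i : Fin 5, 1 ≤ ![1,2,2,2,2] i := by decide
    exact this _
  have h5 : (1 : ℕ∞) ≤ ((![1,2,2,2,2] (c e) : ℕ) : ℕ∞) := by exact_mod_cast h4
  have := h5.trans (h2.trans h3)
  simp at this

lemma L2 (c : Sym2 (Fin 7) → Fin 5) (h : IsPackingEdgeColoring G0 ![1,2,2,2,2] c)
    {e f : Sym2 (Fin 7)} (he : e ∈ G0.edgeSet) (hf : f ∈ G0.edgeSet) (hef : e ≠ f)
    (hce : c e ≠ 0) {a b : Fin 7} (ha : a ∈ e) (hb : b ∈ f) (hab : G0.Adj a b) :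
    c e ≠ c f := by
  intro hcc
  have h2 := h e he f hf hef hcc
  have h3 : edgeDist G0 e f ≤ 1 := by
    have := edgeDist_le G0 ha hb
    rwa [SimpleGraph.edist_eq_one_iff_adj.mpr hab] at this
  have h4 : ((![1,2,2,2,2] (c e) : ℕ) : ℕ∞) = 2 := by
    have : ![1,2,2,2,2] (c e) = 2 := by
      have : ∀ i : Fin 5, i ≠ 0 → ![1,2,2,2,2] i = 2 := by decide
      exact this _ hce
    rw [this]; rfl
  rw [h4] at h2
  have := h2.trans h3
  norm_num at this

/-- In every $(1,2^4)$-packing edge-coloring of the house graph,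
the edge $w_1w_2$ does not get the matching color. -/
theorem stmt3 : ∀ c : Sym2 (Fin 7) → Fin 5,
    IsPackingEdgeColoring G0 ![1,2,2,2,2] c → c s(0,1) ≠ 0 := by
  intro c h hc
  -- edges
  have m01 : s((0:Fin 7),1) ∈ G0.edgeSet := by rw [SimpleGraph.mem_edgeSet]; decide
  have m12 : s((1:Fin 7),2) ∈ G0.edgeSet := by rw [SimpleGraph.mem_edgeSet]; decide
  have m23 : s((2:Fin 7),3) ∈ G0.edgeSet := by rw [SimpleGraph.mem_edgeSet]; decide
  have m34 : s((3:Fin 7),4) ∈ G0.edgeSet := by rw [SimpleGraph.mem_edgeSet]; decide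
  have m04 : s((0:Fin 7),4) ∈ G0.edgeSet := by rw [SimpleGraph.mem_edgeSet]; decide
  have m14 : s((1:Fin 7),4) ∈ G0.edgeSet := by rw [SimpleGraph.mem_edgeSet]; decide
  have m36 : s((3:Fin 7),6) ∈ G0.edgeSet := by rw [SimpleGraph.mem_edgeSet]; decide
  -- nonzero colors
  have n12 : c s(1,2) ≠ 0 := fun hn => L1 c h m01 m12 (by decide)
    (Sym2.mem_mk_right 0 1) (Sym2.mem_mk_left 1 2) (hc.trans hn.symm)
  have n04 : c s(0,4) ≠ 0 := fun hn => L1 c h m01 m04 (by decide)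
    (Sym2.mem_mk_left 0 1) (Sym2.mem_mk_left 0 4) (hc.trans hn.symm)
  have n14 : c s(1,4) ≠ 0 := fun hn => L1 c h m01 m14 (by decide)
    (Sym2.mem_mk_right 0 1) (Sym2.mem_mk_left 1 4) (hc.trans hn.symm)
  -- pairwise distinct among the six edges
  have d1 : c s(1,2) ≠ c s(0,4) := L2 c h m12 m04 (by decide) n12
    (Sym2.mem_mk_left 1 2) (Sym2.mem_mk_left 0 4) (by decide)
  have d2 : c s(1,2) ≠ c s(1,4) := L1 c h m12 m14 (by decide)
    (Sym2.mem_mk_left 1 2) (Sym2.mem_mk_left 1 4)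
  have d3 : c s(0,4) ≠ c s(1,4) := L1 c h m04 m14 (by decide)
    (Sym2.mem_mk_right 0 4) (Sym2.mem_mk_right 1 4)
  have d4 : c s(2,3) ≠ c s(1,2) := L1 c h m23 m12 (by decide)
    (Sym2.mem_mk_left 2 3) (Sym2.mem_mk_right 1 2)
  have d5 : c s(0,4) ≠ c s(2,3) := L2 c h m04 m23 (by decide) n04
    (Sym2.mem_mk_right 0 4) (Sym2.mem_mk_right 2 3) (by decide)
  have d6 : c s(1,4) ≠ c s(2,3) := L2 c h m14 m23 (by decide) n14
    (Sym2.mem_mk_left 1 4) (Sym2.mem_mk_left 2 3) (by decide)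
  have d7 : c s(3,4) ≠ c s(2,3) := L1 c h m34 m23 (by decide)
    (Sym2.mem_mk_left 3 4) (Sym2.mem_mk_right 2 3)
  have d8 : c s(3,4) ≠ c s(0,4) := L1 c h m34 m04 (by decide)
    (Sym2.mem_mk_right 3 4) (Sym2.mem_mk_right 0 4)
  have d9 : c s(3,4) ≠ c s(1,4) := L1 c h m34 m14 (by decide)
    (Sym2.mem_mk_right 3 4) (Sym2.mem_mk_right 1 4)
  have d10 : c s(1,2) ≠ c s(3,4) := L2 c h m12 m34 (by decide) n12
    (Sym2.mem_mk_right 1 2) (Sym2.mem_mk_left 3 4) (by decide)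
  have d11 : c s(3,6) ≠ c s(2,3) := L1 c h m36 m23 (by decide)
    (Sym2.mem_mk_left 3 6) (Sym2.mem_mk_right 2 3)
  have d12 : c s(3,6) ≠ c s(3,4) := L1 c h m36 m34 (by decide)
    (Sym2.mem_mk_left 3 6) (Sym2.mem_mk_left 3 4)
  have d13 : c s(1,2) ≠ c s(3,6) := L2 c h m12 m36 (by decide) n12
    (Sym2.mem_mk_right 1 2) (Sym2.mem_mk_left 3 6) (by decide)
  have d14 : c s(0,4) ≠ c s(3,6) := L2 c h m04 m36 (by decide) n04
    (Sym2.mem_mk_right 0 4) (Sym2.mem_mk_left 3 6) (by decide)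
  have d15 : c s(1,4) ≠ c s(3,6) := L2 c h m14 m36 (by decide) n14
    (Sym2.mem_mk_right 1 4) (Sym2.mem_mk_left 3 6) (by decide)
  -- pigeonhole: six pairwise distinct values in Fin 5
  have v1 := (c s((1:Fin 7),2)).isLt
  have v2 := (c s((2:Fin 7),3)).isLt
  have v3 := (c s((3:Fin 7),4)).isLt
  have v4 := (c s((0:Fin 7),4)).isLt
  have v5 := (c s((1:Fin 7),4)).isLt
  have v6 := (c s((3:Fin 7),6)).isLt
  simp only [Fin.ne_iff_vne] at d1 d2 d3 d4 d5 d6 d7 d8 d9 d10 d11 d12 d13 d14 d15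
  omega
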